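/- arXiv:2104.14384 — 7 statements merged into one kernel-verified Lean document; each statement's English description precedes it below -/
import Mathlib

section
/- For every integer D ≥ 1 and all x ∈ (0,1), the polynomial p_3(x) = x^{2D+2} − (D+1)^2 x^{D+2} + 2D(D+2) x^{D+1} − (D+1)^2 x^D + 1 is strictly positive. -/
theorem stmt_6 (D : ℕ) (hD : 1 ≤ D) (x : ℝ) (hx : x ∈ Set.Ioo (0 : ℝ) 1) :
    0 < x ^ (2 * D + 2) - (D + 1 : ℝ) ^ 2 * x ^ (D + 2) +
        2 * D * (D + 2) * x ^ (D + 1) - (D + 1 : ℝ) ^ 2 * x ^ D + 1 := by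
  obtain ⟨hx0, hx1⟩ := hx
  set y : ℝ := Real.sqrt x with hy
  have hy0 : 0 < y := Real.sqrt_pos.2 hx0
  have hyx : y ^ 2 = x := Real.sq_sqrt hx0.le
  have hy1 : y < 1 := by nlinarith
  set S : ℝ := ∑ k ∈ Finset.range (D + 1), x ^ k with hS
  have hSy : S = ∑ k ∈ Finset.range (D + 1), y ^ (2 * k) := by
    refine Finset.sum_congr rfl fun k _ => ?_
    rw [← hyx, ← pow_mul]
  have reflect : ∑ k ∈ Finset.range (D + 1), y ^ (2 * (D - k)) = S := by
    rw [hSy]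
    simpa using Finset.sum_range_reflect (fun k => y ^ (2 * k)) (D + 1)
  have hterm : ∀ k ∈ Finset.range (D + 1),
      2 * y ^ D ≤ y ^ (2 * k) + y ^ (2 * (D - k)) := by
    intro k hk
    have hkD : k ≤ D := Nat.lt_succ_iff.mp (Finset.mem_range.mp hk)
    have hprod : y ^ k * y ^ (D - k) = y ^ D := by
      rw [← pow_add, Nat.add_sub_cancel' hkD]
    rw [mul_comm 2 k, pow_mul, mul_comm 2 (D - k), pow_mul]
    nlinarith [sq_nonneg (y ^ k - y ^ (D - k))]
  have hstrict : 2 * y ^ D < y ^ (2 * 0) + y ^ (2 * (D - 0)) := by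
    have hD1 : y ^ D < 1 := pow_lt_one₀ hy0.le hy1 (by omega)
    have : y ^ (2 * D) = (y ^ D) ^ 2 := by rw [mul_comm, pow_mul]
    simp only [Nat.sub_zero, mul_zero, pow_zero]
    nlinarith [sq_nonneg (1 - y ^ D)]
  have hsum : (∑ _k ∈ Finset.range (D + 1), 2 * y ^ D) <
      ∑ k ∈ Finset.range (D + 1), (y ^ (2 * k) + y ^ (2 * (D - k))) :=
    Finset.sum_lt_sum hterm ⟨0, Finset.mem_range.mpr (by omega), hstrict⟩
  have hsum' : (D + 1 : ℝ) * (2 * y ^ D) < S + S := by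
    rw [Finset.sum_add_distrib, reflect, ← hSy] at hsum
    simpa [Finset.sum_const, Finset.card_range, nsmul_eq_mul] using hsum
  have hSgt : (D + 1 : ℝ) * y ^ D < S := by linarith
  have hxD : x ^ D = (y ^ D) ^ 2 := by rw [← hyx, ← pow_mul, mul_comm, pow_mul]
  have hypos : (0 : ℝ) ≤ (D + 1 : ℝ) * y ^ D := by positivity
  have key : 0 < S ^ 2 - (D + 1 : ℝ) ^ 2 * x ^ D := by nlinarith
  -- the factorization
  have hgs : S * (x - 1) = x ^ (D + 1) - 1 := geom_sum_mul x (D + 1)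
  have e3 : x ^ (D + 1) = x ^ D * x := by rw [pow_succ]
  have hlin : (1 - x) * S = 1 - x ^ D * x := by linear_combination -hgs - e3
  have h4 : (1 - x) ^ 2 * S ^ 2 = (1 - x ^ D * x) ^ 2 := by
    rw [← mul_pow, hlin]
  have keyfac : 0 < (1 - x) ^ 2 * (S ^ 2 - (D + 1 : ℝ) ^ 2 * x ^ D) :=
    mul_pos (pow_pos (by linarith) 2) key
  have hfin : 0 < (1 - x ^ D * x) ^ 2 - (D + 1 : ℝ) ^ 2 * x ^ D * (1 - x) ^ 2 := by
    nlinarith [keyfac, h4]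
  have e1 : x ^ (2 * D + 2) = (x ^ D) ^ 2 * x ^ 2 := by
    rw [pow_add, mul_comm 2 D, pow_mul]
  have e2 : x ^ (D + 2) = x ^ D * x ^ 2 := by rw [pow_add]
  rw [e1, e2, e3]
  nlinarith [hfin]
end

section
/- For every integer D ≥ 2 and all x ∈ (0,1), the polynomial p_4(x) = −(D−1)x^{D+1} + (D+1)x^D − (D+1)x + (D−1) is strictly positive. -/
theorem stmt_7 (D : ℕ) (hD : 2 ≤ D) (x : ℝ) (hx : x ∈ Set.Ioo (0 : ℝ) 1) :
    0 < -((D : ℝ) - 1) * x ^ (D + 1) + (D + 1) * x ^ D - (D + 1) * x + ((D : ℝ) - 1) := by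
  obtain ⟨hx0, hx1⟩ := hx
  set n := D - 1 with hn
  have hDn : D = n + 1 := by omega
  have hn1 : 1 ≤ n := by omega
  have hterm : ∀ k ∈ Finset.range n, (1 - x^(k+1)) * (1 - x^(n-k)) =
      (1 + x^D) - x^(k+1) - x^(n-k) := by
    intro k hk
    have hk' : k < n := Finset.mem_range.mp hk
    have hkd : (k+1) + (n-k) = D := by omega
    have hx' : x^(k+1) * x^(n-k) = x^D := by rw [← pow_add, hkd]
    nlinarith [hx']
  have hspos : 0 < ∑ k ∈ Finset.range n, (1 - x^(k+1)) * (1 - x^(n-k)) := by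
    apply Finset.sum_pos
    · intro k hk
      have hk' : k < n := Finset.mem_range.mp hk
      have h1 : x^(k+1) < 1 := pow_lt_one₀ hx0.le hx1 (by omega)
      have h2 : x^(n-k) < 1 := pow_lt_one₀ hx0.le hx1 (by omega)
      nlinarith
    · exact Finset.nonempty_range_iff.mpr (by omega)
  have hB : ∑ k ∈ Finset.range n, x^(n-k) = ∑ k ∈ Finset.range n, x^(k+1) := by
    have h := Finset.sum_range_reflect (fun j => x^(j+1)) n
    rw [← h]
    apply Finset.sum_congr rfl
    intro j hj
    have : j < n := Finset.mem_range.mp hj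
    congr 1
    omega
  have hA : (1-x) * ∑ k ∈ Finset.range n, x^(k+1) = x - x^D := by
    have h := geom_sum_mul x n
    have hxn : x * x^n = x^D := by rw [hDn, pow_succ]; ring
    have hsum : ∑ k ∈ Finset.range n, x^(k+1) = x * ∑ k ∈ Finset.range n, x^k := by
      rw [Finset.mul_sum]; exact Finset.sum_congr rfl (fun k _ => by ring)
    rw [hsum]
    linear_combination (-x) * h - hxn
  have hs : ∑ k ∈ Finset.range n, (1 - x^(k+1)) * (1 - x^(n-k)) =
      n * (1 + x^D) - 2 * ∑ k ∈ Finset.range n, x^(k+1) := by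
    rw [Finset.sum_congr rfl hterm, Finset.sum_sub_distrib, Finset.sum_sub_distrib,
      Finset.sum_const, hB, Finset.card_range]
    push_cast
    ring
  have hDcast : (D : ℝ) = (n : ℝ) + 1 := by rw [hDn]; push_cast; ring
  have hxD1 : x^(D+1) = x * x^D := by rw [pow_succ]; ring
  have key : -((D : ℝ) - 1) * x ^ (D + 1) + (D + 1) * x ^ D - (D + 1) * x + ((D : ℝ) - 1)
      = (1-x) * ∑ k ∈ Finset.range n, (1 - x^(k+1)) * (1 - x^(n-k)) := by
    rw [hs, hDcast, hxD1]
    linear_combination (2:ℝ) * hA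
  rw [key]
  exact mul_pos (by linarith) hspos
end

section
/- For every integer D ≥ 1 and all x ∈ (0,1), the quantity q(x) = −2x^{D+2} + (D^2+3D+2)x^2 − 2D(D+2)x + D(D+1) is strictly positive, and q(1) = 0. -/
theorem stmt_9 (D : ℕ) (hD : 1 ≤ D) :
    (∀ x : ℝ, x ∈ Set.Ioo (0 : ℝ) 1 →
        0 < -2 * x ^ (D + 2) + ((D : ℝ) ^ 2 + 3 * D + 2) * x ^ 2 -
            2 * D * (D + 2) * x + D * (D + 1)) ∧
      -2 * (1 : ℝ) ^ (D + 2) + ((D : ℝ) ^ 2 + 3 * D + 2) * 1 ^ 2 -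
          2 * D * (D + 2) * 1 + D * (D + 1) = 0 := by
  constructor
  · rintro x ⟨hx0, hx1⟩
    have hgs : (∑ k ∈ Finset.range (D + 2), x ^ k) * (x - 1) = x ^ (D + 2) - 1 :=
      geom_sum_mul x (D + 2)
    -- termwise bound: 1 - x^k ≤ k(1-x)
    have hsum : ∀ k ∈ Finset.range (D + 2), 1 - x ^ k ≤ (k : ℝ) * (1 - x) := by
      intro k _
      have h := one_add_mul_le_pow (by linarith : (-2 : ℝ) ≤ x - 1) k
      rw [show (1 : ℝ) + (x - 1) = x by ring] at h
      linarith
    have h2mem : (2 : ℕ) ∈ Finset.range (D + 2) := by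
      simp only [Finset.mem_range]; omega
    have hstrict : 1 - x ^ 2 < ((2 : ℕ) : ℝ) * (1 - x) := by
      push_cast; nlinarith
    have hlt : ∑ k ∈ Finset.range (D + 2), (1 - x ^ k) <
        ∑ k ∈ Finset.range (D + 2), (k : ℝ) * (1 - x) :=
      Finset.sum_lt_sum hsum ⟨2, h2mem, hstrict⟩
    have hgauss : (∑ k ∈ Finset.range (D + 2), (k : ℝ)) * 2 = ((D : ℝ) + 2) * ((D : ℝ) + 1) := by
      have := Finset.sum_range_id_mul_two (D + 2)
      have h := congrArg (Nat.cast : ℕ → ℝ) this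
      push_cast at h
      linarith [h]
    have hS1 : ∑ k ∈ Finset.range (D + 2), (1 - x ^ k) =
        ((D : ℝ) + 2) - ∑ k ∈ Finset.range (D + 2), x ^ k := by
      rw [Finset.sum_sub_distrib, Finset.sum_const]
      simp
    have hS2 : ∑ k ∈ Finset.range (D + 2), (k : ℝ) * (1 - x) =
        (∑ k ∈ Finset.range (D + 2), (k : ℝ)) * (1 - x) := by
      rw [Finset.sum_mul]
    rw [hS1, hS2] at hlt
    set S : ℝ := ∑ k ∈ Finset.range (D + 2), x ^ k with hSdef
    -- bracket positivity
    have hB : 0 < 2 * S - ((D : ℝ) + 2) * (((D : ℝ) + 1) * x - ((D : ℝ) - 1)) := by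
      nlinarith [hlt, hgauss]
    have h1x : 0 < 1 - x := by linarith
    nlinarith [mul_pos h1x hB, hgs]
  · ring
end

section
/- The function r ↦ 1/(1 − e^{1/r}) + r is strictly increasing on (0, ∞), tends to 0 as r → 0+, and tends to 1/2 as r → +∞. -/
open Filter Topology

/-!
In the variable `x = 1 / r` the function is `1 / (1 - eˣ) + 1 / x`, which is strictly decreasing on
`(0, ∞)` because `(eˣ - 1)² = eˣ (2 sinh (x / 2))² > x² eˣ` (as `|sinh t| > |t|` for `t ≠ 0`).
It tends to `0` as `x → ∞`, and to `1 / 2` as `x → 0` since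
`1 / (1 - eˣ) + 1 / x = ((eˣ - 1 - x) / x²) / ((eˣ - 1) / x)` and `eˣ = 1 + x + x² / 2 + o(x²)`.
-/

namespace Real

theorem exp_sub_one_ne_zero {x : ℝ} (hx : x ≠ 0) : exp x - 1 ≠ 0 :=
  sub_ne_zero.2 (exp_eq_one_iff x |>.not.2 hx)

theorem sq_mul_exp_lt_exp_sub_one_sq {x : ℝ} (hx : x ≠ 0) : x ^ 2 * exp x < (exp x - 1) ^ 2 := by
  have hsinh : (x / 2) ^ 2 < sinh (x / 2) ^ 2 := by
    rw [← sq_abs, ← sq_abs (sinh _), abs_sinh]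
    exact pow_lt_pow_left₀ (self_lt_sinh_iff.2 (by positivity)) (abs_nonneg _) two_ne_zero
  have hexp : (exp x - 1) ^ 2 = exp x * (2 * sinh (x / 2)) ^ 2 := by
    have hx2 : exp x = exp (x / 2) ^ 2 := by rw [← exp_nat_mul]; ring_nf
    rw [sinh_eq, exp_neg, hx2]
    field_simp
  rw [hexp]
  nlinarith [exp_pos x]

theorem hasDerivAt_one_div_one_sub_exp_add_one_div {x : ℝ} (hx : x ≠ 0) :
    HasDerivAt (fun x => 1 / (1 - exp x) + 1 / x)
      (exp x / (exp x - 1) ^ 2 - 1 / x ^ 2) x := by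
  have hden : 1 - exp x ≠ 0 := by rw [← neg_sub]; exact neg_ne_zero.2 (exp_sub_one_ne_zero hx)
  have h := ((hasDerivAt_exp x).const_sub 1).inv hden |>.add (hasDerivAt_inv hx)
  simp only [one_div]
  exact h.congr_deriv (by ring)

theorem tendsto_one_div_one_sub_exp_add_one_div_atTop :
    Tendsto (fun x => 1 / (1 - exp x) + 1 / x) atTop (𝓝 0) := by
  have h1 : Tendsto (fun x => 1 - exp x) atTop atBot :=
    tendsto_atBot_add_const_left _ 1 (tendsto_neg_atTop_atBot.comp tendsto_exp_atTop)
  simpa using (tendsto_const_nhds (x := (1 : ℝ)).div_atBot h1).add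
    (tendsto_const_nhds (x := (1 : ℝ)).div_atTop tendsto_id)

theorem tendsto_one_div_one_sub_exp_add_one_div_nhdsNE :
    Tendsto (fun x => 1 / (1 - exp x) + 1 / x) (𝓝[≠] 0) (𝓝 (1 / 2)) := by
  have hnum : Tendsto (fun x => (exp x - 1 - x) / x ^ 2) (𝓝[≠] 0) (𝓝 (1 / 2)) := by
    have h := ((exp_sub_sum_range_succ_isLittleO_pow 2).tendsto_div_nhds_zero.mono_left
      (nhdsWithin_le_nhds (s := {0}ᶜ))).add_const (1 / 2)
    rw [zero_add] at h
    refine h.congr' ?_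
    filter_upwards [self_mem_nhdsWithin] with x (hx : x ≠ 0)
    simp only [Finset.sum_range_succ, Finset.sum_range_zero, Nat.factorial]
    field_simp
    ring
  have hden : Tendsto (fun x => (exp x - 1) / x) (𝓝[≠] 0) (𝓝 1) := by
    simpa [div_eq_inv_mul] using (hasDerivAt_exp 0).tendsto_slope_zero
  refine ((hnum.div hden one_ne_zero).congr' ?_).trans (by norm_num)
  filter_upwards [self_mem_nhdsWithin] with x (hx : x ≠ 0)
  have h1 := exp_sub_one_ne_zero hx
  have h2 : 1 - exp x ≠ 0 := by rw [← neg_sub]; exact neg_ne_zero.2 h1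
  show (exp x - 1 - x) / x ^ 2 / ((exp x - 1) / x) = _
  field_simp
  ring

theorem strictAntiOn_one_div_one_sub_exp_add_one_div :
    StrictAntiOn (fun x => 1 / (1 - exp x) + 1 / x) (Set.Ioi 0) := by
  refine strictAntiOn_of_deriv_neg (convex_Ioi 0) (fun x hx => ?_) (fun x hx => ?_)
  · exact (hasDerivAt_one_div_one_sub_exp_add_one_div (ne_of_gt hx)).continuousAt
      |>.continuousWithinAt
  · rw [interior_Ioi] at hx
    have hx0 : x ≠ 0 := ne_of_gt hx
    rw [(hasDerivAt_one_div_one_sub_exp_add_one_div hx0).deriv, sub_neg,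
      div_lt_div_iff₀ (sq_pos_of_ne_zero (exp_sub_one_ne_zero hx0)) (by positivity), one_mul,
      mul_comm]
    exact sq_mul_exp_lt_exp_sub_one_sq hx0

end Real

theorem stmt_12 :
    StrictMonoOn (fun r : ℝ => 1 / (1 - Real.exp (1 / r)) + r) (Set.Ioi 0) ∧
      Tendsto (fun r : ℝ => 1 / (1 - Real.exp (1 / r)) + r)
        (nhdsWithin 0 (Set.Ioi 0)) (nhds 0) ∧
      Tendsto (fun r : ℝ => 1 / (1 - Real.exp (1 / r)) + r) atTop (nhds (1 / 2)) := by
  have hcomp : (fun r : ℝ => 1 / (1 - Real.exp (1 / r)) + r) =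
      (fun x => 1 / (1 - Real.exp x) + 1 / x) ∘ fun r => 1 / r := by
    funext r; simp only [Function.comp_apply, one_div_one_div]
  have hinv_zero : Tendsto (fun r : ℝ => 1 / r) (𝓝[>] 0) atTop := by
    simpa only [one_div] using tendsto_inv_nhdsGT_zero
  have hinv_atTop : Tendsto (fun r : ℝ => 1 / r) atTop (𝓝[>] 0) := by
    simpa only [one_div] using tendsto_inv_atTop_nhdsGT_zero
  rw [hcomp]
  refine ⟨fun a ha b hb hab => ?_, ?_, ?_⟩
  · exact Real.strictAntiOn_one_div_one_sub_exp_add_one_div (Set.mem_Ioi.2 (one_div_pos.2 hb))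
      (Set.mem_Ioi.2 (one_div_pos.2 ha)) (one_div_lt_one_div_of_lt ha hab)
  · exact Real.tendsto_one_div_one_sub_exp_add_one_div_atTop.comp hinv_zero
  · exact (Real.tendsto_one_div_one_sub_exp_add_one_div_nhdsNE.mono_left
      (nhdsGT_le_nhdsNE 0)).comp hinv_atTop
end

section
/- For each α ∈ (0, 1/2) the equation 1/(r − α) = e^{1/r} − 1 has a unique solution r = r^∞(α) with r^∞(α) > α. -/
/-!
Solving the equation for `α` gives `α = alphaOf r := r - 1 / (e^{1/r} - 1)`, so the solutions are
the `r > 0` with `alphaOf r = α`. The function `alphaOf` is strictly increasing on `(0, ∞)`: its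
derivative is positive because `t < 2 sinh (t / 2)` for `t = 1 / r > 0`. It satisfies
`alphaOf r < r` and, by `e^t - 1 ≥ t + t² / 2`, `alphaOf r ≥ r / (2r + 1)`, which exceeds `α` at
`r = 1 / (1 - 2α)`. The intermediate value theorem on `[α, 1 / (1 - 2α)]` gives a solution, and
strict monotonicity makes it unique.
-/

open Real Set

lemma mul_exp_half_lt_exp_sub_one {t : ℝ} (ht : 0 < t) : t * exp (t / 2) < exp t - 1 := by
  have hsinh : t / 2 < sinh (t / 2) := self_lt_sinh_iff.2 (by linarith)
  have hsq : exp (t / 2) * exp (t / 2) = exp t := by rw [← exp_add, add_halves]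
  have hinv : exp (-(t / 2)) * exp (t / 2) = 1 := by rw [← exp_add, neg_add_cancel, exp_zero]
  rw [sinh_eq] at hsinh
  nlinarith [mul_lt_mul_of_pos_right hsinh (exp_pos (t / 2))]

lemma sq_mul_exp_lt_exp_sub_one_sq {t : ℝ} (ht : 0 < t) : t ^ 2 * exp t < (exp t - 1) ^ 2 := by
  have hsq : exp (t / 2) * exp (t / 2) = exp t := by rw [← exp_add, add_halves]
  have hpos : 0 < t * exp (t / 2) := by positivity
  nlinarith [mul_exp_half_lt_exp_sub_one ht]

lemma exp_one_div_sub_one_pos {r : ℝ} (hr : 0 < r) : 0 < exp (1 / r) - 1 :=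
  sub_pos.2 (one_lt_exp_iff.2 (by positivity))

/-- The equation `1 / (r - α) = e^{1/r} - 1` solved for `α`. -/
noncomputable def alphaOf (r : ℝ) : ℝ := r - (exp (1 / r) - 1)⁻¹

lemma hasDerivAt_alphaOf {r : ℝ} (hr : 0 < r) :
    HasDerivAt alphaOf (1 - exp (1 / r) / (r ^ 2 * (exp (1 / r) - 1) ^ 2)) r := by
  have hinv : HasDerivAt (fun x : ℝ => 1 / x) (-(r ^ 2)⁻¹) r := by
    simpa using hasDerivAt_inv hr.ne'
  have hexp : HasDerivAt (fun x => exp (1 / x) - 1) (exp (1 / r) * -(r ^ 2)⁻¹) r :=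
    ((hasDerivAt_exp (1 / r)).comp r hinv).sub_const 1
  refine ((hasDerivAt_id r).sub (hexp.inv (exp_one_div_sub_one_pos hr).ne')).congr_deriv ?_
  field_simp

lemma alphaOf_deriv_pos {r : ℝ} (hr : 0 < r) :
    0 < 1 - exp (1 / r) / (r ^ 2 * (exp (1 / r) - 1) ^ 2) := by
  have hkey := sq_mul_exp_lt_exp_sub_one_sq (one_div_pos.2 hr)
  rw [sub_pos, div_lt_one (by have := exp_one_div_sub_one_pos hr; positivity)]
  calc exp (1 / r) = r ^ 2 * ((1 / r) ^ 2 * exp (1 / r)) := by field_simp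
    _ < r ^ 2 * (exp (1 / r) - 1) ^ 2 := by gcongr

lemma strictMonoOn_alphaOf : StrictMonoOn alphaOf (Ioi 0) := by
  apply strictMonoOn_of_deriv_pos (convex_Ioi 0)
  · exact fun r hr => (hasDerivAt_alphaOf hr).continuousAt.continuousWithinAt
  · intro r hr
    rw [interior_Ioi] at hr
    rw [(hasDerivAt_alphaOf hr).deriv]
    exact alphaOf_deriv_pos hr

lemma alphaOf_lt_self {r : ℝ} (hr : 0 < r) : alphaOf r < r :=
  sub_lt_self r (inv_pos.2 (exp_one_div_sub_one_pos hr))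

lemma div_two_mul_add_one_le_alphaOf {r : ℝ} (hr : 0 < r) : r / (2 * r + 1) ≤ alphaOf r := by
  have hquad : 1 / r + 1 / (2 * r ^ 2) ≤ exp (1 / r) - 1 := by
    have := quadratic_le_exp_of_nonneg (one_div_pos.2 hr).le
    have h : (1 / r) ^ 2 / 2 = 1 / (2 * r ^ 2) := by field_simp
    linarith
  have hinv : (exp (1 / r) - 1)⁻¹ ≤ 2 * r ^ 2 / (2 * r + 1) := by
    calc (exp (1 / r) - 1)⁻¹ ≤ (1 / r + 1 / (2 * r ^ 2))⁻¹ := inv_anti₀ (by positivity) hquad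
      _ = 2 * r ^ 2 / (2 * r + 1) := by field_simp
  have hsplit : r / (2 * r + 1) = r - 2 * r ^ 2 / (2 * r + 1) := by field_simp; ring
  rw [hsplit, alphaOf]
  linarith

lemma alphaOf_eq_iff {α r : ℝ} (hr : 0 < r) :
    alphaOf r = α ↔ α < r ∧ 1 / (r - α) = exp (1 / r) - 1 := by
  constructor
  · rintro rfl
    refine ⟨alphaOf_lt_self hr, ?_⟩
    rw [alphaOf, sub_sub_cancel, one_div, inv_inv]
  · rintro ⟨-, heq⟩
    rw [alphaOf, ← heq, one_div, inv_inv, sub_sub_cancel]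

theorem stmt_13 (α : ℝ) (hα : 0 < α) (hα2 : α < 1 / 2) :
    ∃! r : ℝ, α < r ∧ 1 / (r - α) = Real.exp (1 / r) - 1 := by
  set b := (1 - 2 * α)⁻¹
  have hb : 1 < b := one_lt_inv₀ (by linarith) |>.2 (by linarith)
  have hαb : α < alphaOf b := by
    refine lt_of_lt_of_le ?_ (div_two_mul_add_one_le_alphaOf (by linarith))
    rw [lt_div_iff₀ (by linarith)]
    nlinarith [mul_inv_cancel₀ (show 1 - 2 * α ≠ 0 by linarith)]
  have hcont : ContinuousOn alphaOf (Icc α b) := fun x hx =>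
    (hasDerivAt_alphaOf (hα.trans_le hx.1)).continuousAt.continuousWithinAt
  obtain ⟨r, hrab, hr⟩ := intermediate_value_Icc (by linarith) hcont
    ⟨(alphaOf_lt_self hα).le, hαb.le⟩
  have hr0 : 0 < r := hα.trans_le hrab.1
  refine ⟨r, (alphaOf_eq_iff hr0).1 hr, fun s hs => ?_⟩
  have hs0 : 0 < s := hα.trans hs.1
  exact strictMonoOn_alphaOf.injOn hs0 hr0 (((alphaOf_eq_iff hs0).2 hs).trans hr.symm)
end

section
/- For any polynomial p in m variables with non-negative coefficients, any positive integer n, and any nonnegative rationals α_1, ..., α_m such that α_i·n are integers, the coefficient of x_1^{α_1 n} ··· x_m^{α_m n} in p(x_1,...,x_m)^n is at most (inf over x_1,...,x_m > 0 of p(x_1,...,x_m) / (x_1^{α_1} ··· x_m^{α_m}))^n. -/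
open MvPolynomial

lemma aux_coeff_nonneg {m : ℕ} (p : MvPolynomial (Fin m) ℝ)
    (hp : ∀ c, 0 ≤ p.coeff c) (n : ℕ) : ∀ c, 0 ≤ (p ^ n).coeff c := by
  induction n with
  | zero =>
    intro c
    simp [MvPolynomial.coeff_one]
    positivity
  | succ k ih =>
    intro c
    rw [pow_succ, MvPolynomial.coeff_mul]
    exact Finset.sum_nonneg fun d _ => mul_nonneg (ih _) (hp _)

lemma aux_coeff_le_eval {m : ℕ} (q : MvPolynomial (Fin m) ℝ)
    (hq : ∀ c, 0 ≤ q.coeff c) (x : Fin m → ℝ) (hx : ∀ i, 0 < x i)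
    (c : Fin m →₀ ℕ) :
    q.coeff c * ∏ i, x i ^ c i ≤ MvPolynomial.eval x q := by
  rw [MvPolynomial.eval_eq]
  have hps : ∀ d : Fin m →₀ ℕ, ∏ i ∈ d.support, x i ^ d i = ∏ i, x i ^ d i := by
    intro d
    refine Finset.prod_subset (Finset.subset_univ _) fun i _ hi => ?_
    rw [Finsupp.notMem_support_iff.mp hi, pow_zero]
  by_cases hmem : c ∈ q.support
  · have := Finset.single_le_sum
      (f := fun d : Fin m →₀ ℕ => q.coeff d * ∏ i ∈ d.support, x i ^ d i)
      (fun d _ => mul_nonneg (hq d) (Finset.prod_nonneg fun i _ => pow_nonneg (hx i).le _))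
      hmem
    rw [← hps c]
    exact this
  · rw [MvPolynomial.notMem_support_iff.mp hmem, zero_mul]
    exact Finset.sum_nonneg fun d _ => mul_nonneg (hq d)
      (Finset.prod_nonneg fun i _ => pow_nonneg (hx i).le _)

theorem stmt_16 (m : ℕ) (p : MvPolynomial (Fin m) ℝ)
    (hp : ∀ c, 0 ≤ p.coeff c)
    (n : ℕ) (hn : 0 < n)
    (α : Fin m → ℚ) (hα : ∀ i, 0 ≤ α i)
    (c : Fin m →₀ ℕ) (hc : ∀ i, (c i : ℚ) = α i * n) :
    (p ^ n).coeff c ≤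
      (sInf {y : ℝ | ∃ x : Fin m → ℝ, (∀ i, 0 < x i) ∧
        y = MvPolynomial.eval x p / ∏ i, x i ^ ((α i : ℝ))}) ^ n := by
  set S := {y : ℝ | ∃ x : Fin m → ℝ, (∀ i, 0 < x i) ∧
      y = MvPolynomial.eval x p / ∏ i, x i ^ ((α i : ℝ))} with hS
  set a := (p ^ n).coeff c with ha
  have ha0 : 0 ≤ a := aux_coeff_nonneg p hp n c
  -- every element of S is ≥ a^(1/n)
  have key : ∀ y ∈ S, a ≤ y ^ n := by
    rintro y ⟨x, hx, rfl⟩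
    have hprodpos : 0 < ∏ i, x i ^ ((α i : ℝ)) :=
      Finset.prod_pos fun i _ => Real.rpow_pos_of_pos (hx i) _
    have hevalnn : 0 ≤ MvPolynomial.eval x p := by
      have h0 := aux_coeff_le_eval p hp x hx 0
      simp only [Finsupp.coe_zero, Pi.zero_apply, pow_zero, Finset.prod_const_one, mul_one] at h0
      exact le_trans (hp 0) h0
    -- ∏ x i ^ c i = (∏ x i ^ α i)^n
    have hprod : (∏ i, x i ^ ((α i : ℝ))) ^ n = ∏ i, (x i : ℝ) ^ (c i) := by
      rw [← Finset.prod_pow]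
      refine Finset.prod_congr rfl fun i _ => ?_
      rw [← Real.rpow_natCast (x i ^ ((α i : ℝ))) n, ← Real.rpow_natCast (x i) (c i),
        ← Real.rpow_mul (hx i).le]
      congr 1
      have h2 : ((c i : ℝ)) = (α i : ℝ) * n := by exact_mod_cast hc i
      linarith
    have hle : a * ∏ i, x i ^ (c i) ≤ (MvPolynomial.eval x p) ^ n := by
      have := aux_coeff_le_eval (p ^ n) (aux_coeff_nonneg p hp n) x hx c
      simpa [MvPolynomial.eval_pow] using this
    rw [div_pow]
    rw [le_div_iff₀ (by positivity), hprod]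
    exact hle
  have hSnn : ∀ y ∈ S, 0 ≤ y := by
    rintro y ⟨x, hx, rfl⟩
    have hprodpos : 0 < ∏ i, x i ^ ((α i : ℝ)) :=
      Finset.prod_pos fun i _ => Real.rpow_pos_of_pos (hx i) _
    have hevalnn : 0 ≤ MvPolynomial.eval x p := by
      have h0 := aux_coeff_le_eval p hp x hx 0
      simp only [Finsupp.coe_zero, Pi.zero_apply, pow_zero, Finset.prod_const_one, mul_one] at h0
      exact le_trans (hp 0) h0
    positivity
  have hne : S.Nonempty := ⟨_, fun _ => (1:ℝ), fun _ => one_pos, rfl⟩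
  -- lower bound a^(1/n)
  have hroot : ∀ y ∈ S, a ^ ((n : ℝ)⁻¹) ≤ y := by
    intro y hy
    have h1 : a ≤ y ^ n := key y hy
    have hy0 : 0 ≤ y := hSnn y hy
    have := Real.rpow_le_rpow ha0 h1 (by positivity : (0:ℝ) ≤ (n : ℝ)⁻¹)
    calc a ^ ((n : ℝ)⁻¹) ≤ (y ^ n) ^ ((n : ℝ)⁻¹) := this
      _ = y := by
        rw [← Real.rpow_natCast y n, ← Real.rpow_mul hy0,
          mul_inv_cancel₀ (by exact_mod_cast hn.ne'), Real.rpow_one]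
  have hinf : a ^ ((n : ℝ)⁻¹) ≤ sInf S := le_csInf hne hroot
  have hinf0 : (0:ℝ) ≤ a ^ ((n : ℝ)⁻¹) := Real.rpow_nonneg ha0 _
  calc a = (a ^ ((n : ℝ)⁻¹)) ^ n := by
        rw [← Real.rpow_natCast (a ^ ((n : ℝ)⁻¹)) n, ← Real.rpow_mul ha0,
          inv_mul_cancel₀ (by exact_mod_cast hn.ne'), Real.rpow_one]
    _ ≤ (sInf S) ^ n := pow_le_pow_left₀ hinf0 hinf n
end

section
/- Let α ∈ (0, 1/2), D ≥ 1 an integer, and suppose x ∈ (0,1) satisfies D + 1/(1−x) + (D+1)/(x^{D+1} − 1) = Dα. Then α/(1−α) ≤ x ≤ (α/(1−α))·(1 + (1−α)D)/(1 + αD). -/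
/-!
With `S = ∑_{i ≤ D} xⁱ` and `T = ∑_{i ≤ D} i xⁱ`, the left-hand side of the constraint is the mean
`T / S`, so the constraint says `T = DαS`. Clearing denominators with the closed forms
`(1 - x) S = 1 - x^{D+1}` and `(1 - x) T = x S - (D + 1) x^{D+1}`, the lower bound reduces to
`2 S ≤ (D + 1)(1 + x^D)`, which holds termwise after pairing `xⁱ` with `x^{D-i}`, and the upper
bound reduces to `(D + 1)² x^D ≤ S²`, which is Cauchy–Schwarz for the same pairing.
-/

open Finset

theorem sum_range_mul_pow_mul_one_sub {R : Type*} [CommRing R] (x : R) (n : ℕ) :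
    (∑ i ∈ range n, (i : R) * x ^ i) * (1 - x) = x * ∑ i ∈ range n, x ^ i - n * x ^ n := by
  induction n with
  | zero => simp
  | succ n ih =>
    rw [sum_range_succ, sum_range_succ, add_mul, ih]
    push_cast
    ring

theorem geom_sum_reflect {R : Type*} [Semiring R] (x : R) (n : ℕ) :
    ∑ i ∈ range (n + 1), x ^ (n - i) = ∑ i ∈ range (n + 1), x ^ i := by
  simpa using sum_range_reflect (fun i => x ^ i) (n + 1)

theorem add_one_div_one_sub_add_div_pow_sub_one {K : Type*} [Field K] (x : K) (n : ℕ)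
    (hx : x ≠ 1) (hS : ∑ i ∈ range (n + 1), x ^ i ≠ 0) :
    (n : K) + 1 / (1 - x) + (n + 1) / (x ^ (n + 1) - 1) =
      (∑ i ∈ range (n + 1), (i : K) * x ^ i) / ∑ i ∈ range (n + 1), x ^ i := by
  have hgeom := geom_sum_mul_neg x (n + 1)
  have hT := sum_range_mul_pow_mul_one_sub x (n + 1)
  have ha : 1 - x ≠ 0 := sub_ne_zero.mpr hx.symm
  have hw : x ^ (n + 1) - 1 ≠ 0 := by
    rw [← neg_ne_zero, neg_sub, ← hgeom]
    exact mul_ne_zero hS ha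
  rw [eq_div_iff hS]
  field_simp
  push_cast at hT
  linear_combination (1 - x ^ (n + 1)) * hT + (n + 1) * x ^ (n + 1) * hgeom

theorem two_mul_geom_sum_le {x : ℝ} (hx : 0 ≤ x) (n : ℕ) :
    2 * ∑ i ∈ range (n + 1), x ^ i ≤ (n + 1) * (1 + x ^ n) := by
  have hpair : ∀ i ∈ range (n + 1), x ^ i + x ^ (n - i) ≤ 1 + x ^ n := by
    intro i hi
    have hprod : x ^ i * x ^ (n - i) = x ^ n := by
      rw [← pow_add, Nat.add_sub_cancel' (Nat.lt_succ_iff.mp (mem_range.mp hi))]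
    rcases le_total x 1 with h | h
    · nlinarith [pow_le_one₀ (n := i) hx h, pow_le_one₀ (n := n - i) hx h]
    · nlinarith [one_le_pow₀ (n := i) h, one_le_pow₀ (n := n - i) h]
  calc 2 * ∑ i ∈ range (n + 1), x ^ i
      = ∑ i ∈ range (n + 1), (x ^ i + x ^ (n - i)) := by
        rw [sum_add_distrib, geom_sum_reflect, two_mul]
    _ ≤ ∑ i ∈ range (n + 1), (1 + x ^ n) := sum_le_sum hpair
    _ = (n + 1) * (1 + x ^ n) := by simp [mul_add]

theorem sq_mul_pow_le_geom_sum_sq {x : ℝ} (hx : 0 ≤ x) (n : ℕ) :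
    (n + 1) ^ 2 * x ^ n ≤ (∑ i ∈ range (n + 1), x ^ i) ^ 2 := by
  have hsq : (√x ^ n) ^ 2 = x ^ n := by rw [← pow_mul, mul_comm, pow_mul, Real.sq_sqrt hx]
  calc (n + 1) ^ 2 * x ^ n = (∑ _i ∈ range (n + 1), √x ^ n) ^ 2 := by simp [mul_pow, hsq]
    _ ≤ (∑ i ∈ range (n + 1), x ^ i) * ∑ i ∈ range (n + 1), x ^ (n - i) :=
        sum_sq_le_sum_mul_sum_of_sq_le_mul _ (fun _ _ => by positivity) (fun _ _ => by positivity)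
          fun i hi => by
            rw [hsq, ← pow_add, Nat.add_sub_cancel' (Nat.lt_succ_iff.mp (mem_range.mp hi))]
    _ = (∑ i ∈ range (n + 1), x ^ i) ^ 2 := by rw [geom_sum_reflect, sq]

theorem one_add_mul_sum_mul_pow_le {x : ℝ} (hx0 : 0 ≤ x) (hx1 : x < 1) (n : ℕ) :
    (1 + x) * ∑ i ∈ range (n + 1), (i : ℝ) * x ^ i ≤ n * x * ∑ i ∈ range (n + 1), x ^ i := by
  have hS := geom_sum_mul_neg x (n + 1)
  have hT := sum_range_mul_pow_mul_one_sub x (n + 1)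
  push_cast at hT
  set S := ∑ i ∈ range (n + 1), x ^ i
  set T := ∑ i ∈ range (n + 1), (i : ℝ) * x ^ i
  have key : (1 - x) * (n * x * S - (1 + x) * T) = x * ((n + 1) * (1 + x ^ n) - 2 * S) := by
    linear_combination (n + 1) * x * hS - (1 + x) * hT
  have hpos : 0 ≤ x * ((n + 1) * (1 + x ^ n) - 2 * S) :=
    mul_nonneg hx0 (sub_nonneg.mpr (two_mul_geom_sum_le hx0 n))
  rw [← key] at hpos
  exact sub_nonneg.mp ((mul_nonneg_iff_of_pos_left (sub_pos.mpr hx1)).mp hpos)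

theorem mul_sub_mul_add_le_mul_sub {x : ℝ} (hx0 : 0 ≤ x) (hx1 : x < 1) (n : ℕ) :
    x * (n * ∑ i ∈ range (n + 1), x ^ i - ∑ i ∈ range (n + 1), (i : ℝ) * x ^ i) *
        (∑ i ∈ range (n + 1), x ^ i + ∑ i ∈ range (n + 1), (i : ℝ) * x ^ i) ≤
      (∑ i ∈ range (n + 1), (i : ℝ) * x ^ i) *
        ((n + 1) * ∑ i ∈ range (n + 1), x ^ i - ∑ i ∈ range (n + 1), (i : ℝ) * x ^ i) := by
  have hS := geom_sum_mul_neg x (n + 1)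
  have hT := sum_range_mul_pow_mul_one_sub x (n + 1)
  push_cast at hT
  set S := ∑ i ∈ range (n + 1), x ^ i
  set T := ∑ i ∈ range (n + 1), (i : ℝ) * x ^ i
  have key : (1 - x) * (T * ((n + 1) * S - T) - x * (n * S - T) * (S + T)) =
      x * (S ^ 2 - (n + 1) ^ 2 * x ^ n) := by
    linear_combination
      ((n + 1 - x * (n - 1)) * S - T * (1 - x) - (x * S - (n + 1) * x ^ (n + 1))) * hT
        - (n + 1) ^ 2 * x ^ (n + 1) * hS
  have hpos : 0 ≤ x * (S ^ 2 - (n + 1) ^ 2 * x ^ n) :=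
    mul_nonneg hx0 (sub_nonneg.mpr (sq_mul_pow_le_geom_sum_sq hx0 n))
  rw [← key] at hpos
  exact sub_nonneg.mp ((mul_nonneg_iff_of_pos_left (sub_pos.mpr hx1)).mp hpos)

theorem stmt_19 (D : ℕ) (hD : 1 ≤ D) (α : ℝ) (hα : 0 < α) (hα2 : α < 1 / 2)
    (x : ℝ) (hx : x ∈ Set.Ioo (0 : ℝ) 1)
    (heq : (D : ℝ) + 1 / (1 - x) + (D + 1) / (x ^ (D + 1) - 1) = D * α) :
    α / (1 - α) ≤ x ∧ x ≤ α / (1 - α) * ((1 + (1 - α) * D) / (1 + α * D)) := by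
  obtain ⟨hx0, hx1⟩ := hx
  have hD0 : (0 : ℝ) < D := by exact_mod_cast hD
  have hS : 0 < ∑ i ∈ range (D + 1), x ^ i := geom_sum_pos hx0.le (Nat.succ_ne_zero D)
  rw [add_one_div_one_sub_add_div_pow_sub_one x D hx1.ne hS.ne', div_eq_iff hS.ne'] at heq
  have hlow := one_add_mul_sum_mul_pow_le hx0.le hx1 D
  have hup := mul_sub_mul_add_le_mul_sub hx0.le hx1 D
  rw [heq] at hlow hup
  constructor
  · have h : α * (1 + x) ≤ x :=
      le_of_mul_le_mul_left (a := D * ∑ i ∈ range (D + 1), x ^ i) (by linear_combination hlow)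
        (by positivity)
    rw [div_le_iff₀ (by linarith)]
    linarith
  · rw [div_mul_div_comm, le_div_iff₀ (mul_pos (by linarith) (by positivity))]
    exact le_of_mul_le_mul_left (a := D * (∑ i ∈ range (D + 1), x ^ i) ^ 2)
      (by linear_combination hup) (by positivity)
end
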